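/- Let G be a graph with a Hamiltonian cycle and let v be a vertex of G. Replace v by four new vertices forming a complete graph K4, and join each former neighbor of v to some vertex of the K4 (possibly several neighbors to the same new vertex, with the two cycle-neighbors of v attached to distinct new vertices). Then the resulting graph has a Hamiltonian cycle. -/

import Mathlib

/-!
Deleting `v` from the Hamiltonian cycle leaves a path `r` through all other vertices, between the
two cycle-neighbours `a` and `x` of `v`. Its copy in the blown-up graph is closed up by
`x → f x → k → l → f a → a`, where `k` and `l` are the two clique vertices other than the distinct
`f x` and `f a`. The result is a cycle of length `|V| + 3`, the number of vertices of the new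
graph, so it is Hamiltonian.
-/

/-- The graph obtained from `G` by replacing the vertex `v` with a clique `K₄`,
where every former neighbour `a` of `v` is attached to the clique vertex `f a`
(possibly several neighbours to the same clique vertex). -/
def blowupK4 {V : Type*} (G : SimpleGraph V) (v : V) (f : V → Fin 4) :
    SimpleGraph ({u : V // u ≠ v} ⊕ Fin 4) where
  Adj x y :=
    match x, y with
    | .inl a, .inl b => G.Adj a.1 b.1
    | .inl a, .inr i => G.Adj a.1 v ∧ f a.1 = i
    | .inr i, .inl a => G.Adj a.1 v ∧ f a.1 = i
    | .inr i, .inr j => i ≠ j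
  symm := by
    constructor
    rintro (a | i) (b | j) h
    · exact h.symm
    · exact h
    · exact h
    · exact h.symm
  loopless := by
    constructor
    rintro (a | i) h
    · exact G.irrefl h
    · exact h rfl

namespace SimpleGraph.Walk

variable {V : Type*} {G : SimpleGraph V} {u v w : V}

theorem length_induce {s : Set V} (p : G.Walk u w) (hp : ∀ x ∈ p.support, x ∈ s) :
    (p.induce s hp).length = p.length := by
  have h := congrArg length (map_induce p hp)
  rwa [length_map] at h

theorem IsPath.induce {s : Set V} {p : G.Walk u w} (hp : p.IsPath)
    (hps : ∀ x ∈ p.support, x ∈ s) : (p.induce s hps).IsPath :=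
  IsPath.of_map (f := (Embedding.induce s).toHom) (by rwa [map_induce])

theorem IsCycle.exists_isPath_snd_penultimate {p : G.Walk v v} (hp : p.IsCycle) :
    ∃ r : G.Walk p.snd p.penultimate, r.IsPath ∧ v ∉ r.support ∧ r.length + 2 = p.length := by
  cases p with
  | nil => exact absurd hp not_isCycle_nil
  | cons hva q =>
    have hq : ¬ q.Nil := not_nil_of_isCycle_cons hp
    rw [← concat_dropLast (adj_penultimate hq), cons_isCycle_iff, concat_isPath_iff] at hp
    rw [snd_cons, penultimate_cons_of_not_nil _ _ hq]
    exact ⟨q.dropLast, hp.1.1, hp.1.2, by rw [length_cons, ← length_dropLast_add_one hq]⟩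

end SimpleGraph.Walk

theorem Fin.exists_nodup_four_of_ne {i j : Fin 4} (h : i ≠ j) :
    ∃ k l : Fin 4, [i, k, l, j].Nodup := by
  revert i j
  decide

namespace blowupK4

open SimpleGraph Walk

variable {V : Type*} {G : SimpleGraph V} {v : V} {f : V → Fin 4}

@[simp]
theorem adj_inl_inr {a : {u // u ≠ v}} {i : Fin 4} :
    (blowupK4 G v f).Adj (.inl a) (.inr i) ↔ G.Adj a v ∧ f a = i :=
  Iff.rfl

@[simp]
theorem adj_inr_inl {a : {u // u ≠ v}} {i : Fin 4} :
    (blowupK4 G v f).Adj (.inr i) (.inl a) ↔ G.Adj a v ∧ f a = i :=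
  Iff.rfl

@[simp]
theorem adj_inr_inr {i j : Fin 4} : (blowupK4 G v f).Adj (.inr i) (.inr j) ↔ i ≠ j :=
  Iff.rfl

variable (G v f) in
def inl : G.induce {u | u ≠ v} →g blowupK4 G v f where
  toFun u := .inl u
  map_rel' := id

@[simp]
theorem inl_apply (u : {u // u ≠ v}) : inl G v f u = .inl u :=
  rfl

theorem inl_injective : Function.Injective (inl G v f) :=
  Sum.inl_injective

theorem exists_isPath_inl_of_isPath {a x : V} (ha : a ≠ v) (hx : x ≠ v) {r : G.Walk a x}
    (hr : r.IsPath) (hvr : v ∉ r.support) :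
    ∃ w : (blowupK4 G v f).Walk (.inl ⟨a, ha⟩) (.inl ⟨x, hx⟩),
      w.IsPath ∧ w.length = r.length ∧ ∀ i, .inr i ∉ w.support := by
  have hrv : ∀ y ∈ r.support, y ∈ {u | u ≠ v} := fun y hy hyv => hvr (hyv ▸ hy)
  refine ⟨((r.induce _ hrv).map (inl G v f)).copy (inl_apply _) (inl_apply _), ?_, ?_, ?_⟩
  · rw [isPath_copy]
    exact (hr.induce hrv).map inl_injective
  · rw [length_copy, length_map, length_induce]
  · intro i
    rw [support_copy, Walk.support_map]
    simp

theorem exists_isPath_through_clique {a x : V} (hva : G.Adj v a) (hxv : G.Adj x v)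
    (hf : f x ≠ f a) :
    ∃ w : (blowupK4 G v f).Walk (.inl ⟨x, hxv.ne⟩) (.inl ⟨a, hva.ne'⟩),
      w.IsPath ∧ w.length = 5 ∧ ∀ u, .inl u ∈ w.support.tail → u = ⟨a, hva.ne'⟩ := by
  obtain ⟨k, l, hkl⟩ := Fin.exists_nodup_four_of_ne hf
  simp only [List.nodup_cons, List.mem_cons, List.not_mem_nil, or_false, not_or] at hkl
  obtain ⟨⟨hxk, hxl, -⟩, ⟨hkl, hka⟩, hla, -⟩ := hkl
  refine ⟨.cons (adj_inl_inr.2 ⟨hxv, rfl⟩) <| .cons (adj_inr_inr.2 hxk) <|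
    .cons (adj_inr_inr.2 hkl) <| .cons (adj_inr_inr.2 hla) <|
    .cons (adj_inr_inl.2 ⟨hva.symm, rfl⟩) .nil, ?_, rfl, by simp⟩
  have hxa : x ≠ a := fun h => hf (h ▸ rfl)
  simp [Ne.symm, *]

theorem exists_isCycle_length_eq_add_five {a x : V} (hva : G.Adj v a) (hxv : G.Adj x v)
    (hf : f x ≠ f a) {r : G.Walk a x} (hr : r.IsPath) (hvr : v ∉ r.support) :
    ∃ y, ∃ c : (blowupK4 G v f).Walk y y, c.IsCycle ∧ c.length = r.length + 5 := by
  obtain ⟨p, hp, hplen, hpinr⟩ := exists_isPath_inl_of_isPath (f := f) hva.ne' hxv.ne hr hvr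
  obtain ⟨q, hq, hqlen, hqinl⟩ := exists_isPath_through_clique hva hxv hf
  refine ⟨_, p.append q, hp.isCycle_append hq ?_ (by omega), by rw [length_append, hplen, hqlen]⟩
  rintro (u | i) hup huq
  · obtain rfl := hqinl u huq
    have := hp.support_nodup
    rw [← cons_tail_support, List.nodup_cons] at this
    exact this.1 hup
  · exact hpinr i (List.mem_of_mem_tail hup)

end blowupK4

/-- Let `G` be a graph with a Hamiltonian cycle and `v` a vertex of `G`.  Replace `v`
by four new vertices forming a `K₄`, joining each former neighbour `a` of `v` to the
clique vertex `f a` (possibly several neighbours to the same new vertex), in such a way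
that the two neighbours of `v` on the Hamiltonian cycle are attached to distinct new
vertices.  Then the resulting graph has a Hamiltonian cycle. -/
theorem blowupK4_isHamiltonian_of_cycle {V : Type*} [Fintype V] [DecidableEq V]
    (G : SimpleGraph V) (v : V) (f : V → Fin 4)
    (p : G.Walk v v) (hp : p.IsHamiltonianCycle)
    (hends : f (p.getVert 1) ≠ f (p.getVert (p.length - 1))) :
    (blowupK4 G v f).IsHamiltonian := by
  intro _
  obtain ⟨r, hr, hvr, hrlen⟩ := hp.isCycle.exists_isPath_snd_penultimate
  obtain ⟨_, c, hc, hclen⟩ := blowupK4.exists_isCycle_length_eq_add_five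
    (SimpleGraph.Walk.adj_snd hp.not_nil) (SimpleGraph.Walk.adj_penultimate hp.not_nil)
    hends.symm hr hvr
  refine ⟨_, c, SimpleGraph.Walk.isHamiltonianCycle_iff_isCycle_and_length_eq.2 ⟨hc, ?_⟩⟩
  have := hp.length_eq
  simp only [ne_eq, Fintype.card_sum, Fintype.card_subtype_compl, Fintype.card_unique,
    Fintype.card_fin]
  omega
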